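/- For every n ≥ 0, 2^n · β(d^n) = E_{2n+1}, where E_m are the Euler numbers defined by tan(x) + sec(x) = Σ_{m≥0} E_m x^m/m!. -/

import Mathlib

open scoped TensorProduct

/-- cd-monomials: `false` is the letter `c`, `true` is the letter `d`. -/
abbrev Mon := List Bool

/-- The polynomial algebra `F = ℚ⟨c,d⟩`. -/
abbrev F := MonoidAlgebra ℚ (FreeMonoid Bool)

noncomputable def mono (w : Mon) : F := MonoidAlgebra.single (FreeMonoid.ofList w) 1

noncomputable def cF : F := mono [false]
noncomputable def dF : F := mono [true]

noncomputable def gLetter : Bool → F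
  | false => dF
  | true  => cF * dF

noncomputable def gMon : Mon → F
  | [] => 0
  | a :: t => gLetter a * mono t + mono [a] * gMon t

/-- The derivation `G` with `G c = d`, `G d = cd`. -/
noncomputable def G : F →ₗ[ℚ] F :=
  Finsupp.lsum ℚ (fun w => LinearMap.toSpanSingleton ℚ F (gMon (FreeMonoid.toList w)))
    ∘ₗ (MonoidAlgebra.coeffLinearEquiv ℚ).toLinearMap

/-- `Psi n` is the cd-index of the Boolean lattice of rank `n+1`. -/
noncomputable def Psi : ℕ → F
  | 0 => 1
  | n+1 => Psi n * cF + G (Psi n)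

/-- degree of a cd-monomial (`c` has degree 1, `d` degree 2). -/
def deg (w : Mon) : ℕ := w.length + w.count true

/-- `beta v` : coefficient of `v` in the cd-index of the Boolean lattice of rank `deg v + 1`. -/
noncomputable def beta (w : Mon) : ℚ := (Psi (deg w)).coeff (FreeMonoid.ofList w)

open Polynomial

noncomputable def Phi : F →ₐ[ℚ] ℚ[X] :=
  MonoidAlgebra.lift ℚ ℚ[X] (FreeMonoid Bool)
    (FreeMonoid.lift fun b => if b then C (1/2 : ℚ) * (1 + X ^ 2) else X)

lemma mono_mul (u v : Mon) : mono u * mono v = mono (u ++ v) := by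
  simp [mono, MonoidAlgebra.single_mul_single]

lemma mono_nil : mono [] = 1 := rfl

lemma Phi_mono (w : Mon) :
    Phi (mono w) = (w.map fun b => if b then C (1/2 : ℚ) * (1 + X ^ 2) else X).prod := by
  simp [Phi, mono, MonoidAlgebra.lift_single, FreeMonoid.lift_apply]

lemma Phi_cF : Phi cF = X := by simp [cF, Phi_mono]
lemma Phi_dF : Phi dF = C (1/2 : ℚ) * (1 + X ^ 2) := by simp [dF, Phi_mono]

noncomputable def Lh : ℚ[X] →ₗ[ℚ] ℚ[X] where
  toFun p := C (1/2 : ℚ) * (1 + X ^ 2) * derivative p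
  map_add' p q := by simp [mul_add]
  map_smul' r p := by simp [smul_eq_C_mul]; ring

lemma Lh_apply (p : ℚ[X]) : Lh p = C (1/2 : ℚ) * (1 + X ^ 2) * derivative p := rfl

lemma Lh_mul (p q : ℚ[X]) : Lh (p * q) = Lh p * q + p * Lh q := by
  simp [Lh_apply, derivative_mul]; ring

lemma G_mono (w : Mon) : G (mono w) = gMon w := by
  show Finsupp.lsum ℚ (fun w => LinearMap.toSpanSingleton ℚ F (gMon (FreeMonoid.toList w))) (Finsupp.single (FreeMonoid.ofList w) (1:ℚ)) = gMon w
  rw [Finsupp.lsum_single, LinearMap.toSpanSingleton_apply, FreeMonoid.toList_ofList, one_smul]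

lemma Phi_gLetter (a : Bool) : Phi (gLetter a) = Lh (Phi (mono [a])) := by
  cases a
  · simp [gLetter, Phi_mono, Lh_apply, cF, dF]
  · simp [gLetter, Phi_mono, Lh_apply, cF, dF]
    have h2 : (C (2:ℚ)⁻¹) * (C (2:ℚ)) = 1 := by rw [← C_mul]; norm_num
    calc X * (C (2:ℚ)⁻¹ * (1 + X ^ 2)) = (C (2:ℚ)⁻¹ * C 2) * (C 2⁻¹ * (1 + X ^ 2)) * X := by
          rw [h2]; ring
      _ = C 2⁻¹ * (1 + X ^ 2) * (C 2⁻¹ * (C 2 * X)) := by ring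
      _ = C 2⁻¹ * (1 + X ^ 2) * (C 2⁻¹ * ((1 + 1) * X)) := by rw [one_add_one_eq_two, C_ofNat]

lemma Phi_gMon (w : Mon) : Phi (gMon w) = Lh (Phi (mono w)) := by
  induction w with
  | nil => simp [gMon, mono_nil, Lh_apply]
  | cons a t ih =>
    have h1 : mono (a :: t) = mono [a] * mono t := by rw [mono_mul]; rfl
    rw [gMon, map_add, map_mul, map_mul, Phi_gLetter, ih, h1, map_mul, Lh_mul]

lemma Phi_G (p : F) : Phi (G p) = Lh (Phi p) := by
  induction p using MonoidAlgebra.induction_linear with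
  | zero => simp
  | add p q hp hq => simp [map_add, hp, hq]
  | single w c =>
    have : (MonoidAlgebra.single w c : F) = c • mono (FreeMonoid.toList w) := by
      simp [mono, MonoidAlgebra.smul_single']
    show Phi (G (MonoidAlgebra.single w c)) = Lh (Phi (MonoidAlgebra.single w c))
    rw [this, map_smul, map_smul, map_smul, G_mono, Phi_gMon, map_smul]
lemma deg_append (u v : Mon) : deg (u ++ v) = deg u + deg v := by
  simp [deg, List.count_append]; ring

lemma toList_mul_eq (u v : FreeMonoid Bool) :
    FreeMonoid.toList (u * v) = FreeMonoid.toList u ++ FreeMonoid.toList v :=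
  FreeMonoid.toList_mul u v

lemma mem_support_single {u v : FreeMonoid Bool} {c : ℚ}
    (h : (MonoidAlgebra.single u c : F).coeff v ≠ 0) : v = u := by
  by_contra hne
  exact h (Finsupp.single_eq_of_ne' (fun he => hne he.symm))

lemma gMon_supp : ∀ (t : Mon) (v : FreeMonoid Bool), (gMon t).coeff v ≠ 0 →
    deg (FreeMonoid.toList v) = deg t + 1 := by
  classical
  intro t
  induction t with
  | nil => intro v h; simp [gMon] at h
  | cons a s ih =>
    intro v h
    rw [gMon, MonoidAlgebra.coeff_add, Finsupp.add_apply] at h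
    rcases (by by_contra hc; push_neg at hc; simp [hc.1, hc.2] at h :
      (gLetter a * mono s).coeff v ≠ 0 ∨ (mono [a] * gMon s).coeff v ≠ 0) with h1 | h1
    · have hv : v ∈ ((gLetter a * mono s : F)).coeff.support := Finsupp.mem_support_iff.mpr h1
      have hform : gLetter a * mono s = mono ((if a then [false, true] else [true]) ++ s) := by
        cases a <;> simp [gLetter, dF, cF, mono_mul]
      rw [hform] at hv
      have := mem_support_single (Finsupp.mem_support_iff.mp hv)
      subst this
      cases a <;> simp [FreeMonoid.toList_ofList, deg_append, deg] <;> ring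
    · have hv : v ∈ ((mono [a] * gMon s : F)).coeff.support := Finsupp.mem_support_iff.mpr h1
      have := MonoidAlgebra.support_coeff_mul_subset (mono [a]) (gMon s) hv
      rw [Finset.mem_mul] at this
      obtain ⟨x, hx, y, hy, hxy⟩ := this
      have hxe : x = FreeMonoid.ofList [a] := mem_support_single (Finsupp.mem_support_iff.mp hx)
      have hys : deg (FreeMonoid.toList y) = deg s + 1 := ih y (Finsupp.mem_support_iff.mp hy)
      subst hxe; subst hxy
      rw [toList_mul_eq, FreeMonoid.toList_ofList, deg_append, hys]
      have : deg (a :: s) = deg [a] + deg s := by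
        have := deg_append [a] s; simpa using this
      rw [this]; ring

lemma Psi_supp : ∀ (k : ℕ) (v : FreeMonoid Bool), (Psi k).coeff v ≠ 0 →
    deg (FreeMonoid.toList v) = k := by
  classical
  intro k
  induction k with
  | zero =>
    intro v h
    have : v = 1 := by
      have : (Psi 0 : F) = MonoidAlgebra.single 1 1 := rfl
      rw [this] at h; exact mem_support_single h
    subst this
    rfl
  | succ k ih =>
    intro v h
    rw [show Psi (k+1) = Psi k * cF + G (Psi k) from rfl, MonoidAlgebra.coeff_add, Finsupp.add_apply] at h
    rcases (by by_contra hc; push_neg at hc; simp [hc.1, hc.2] at h :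
      (Psi k * cF).coeff v ≠ 0 ∨ (G (Psi k)).coeff v ≠ 0) with h1 | h1
    · have hv := MonoidAlgebra.support_coeff_mul_subset (Psi k) cF (Finsupp.mem_support_iff.mpr h1)
      rw [Finset.mem_mul] at hv
      obtain ⟨x, hx, y, hy, hxy⟩ := hv
      have hye : y = FreeMonoid.ofList [false] := mem_support_single (Finsupp.mem_support_iff.mp hy)
      have hxs : deg (FreeMonoid.toList x) = k := ih x (Finsupp.mem_support_iff.mp hx)
      subst hye; subst hxy
      rw [toList_mul_eq, FreeMonoid.toList_ofList, deg_append, hxs]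
      simp [deg]
    · -- G (Psi k) = (Psi k).sum fun w c => c • gMon (toList w)
      have hGs : G (Psi k) = (Psi k).coeff.sum fun w c => c • gMon (FreeMonoid.toList w) := by
        rfl
      rw [hGs] at h1
      have h2 : ((Psi k).coeff.sum fun w c => c • gMon (FreeMonoid.toList w)).coeff v =
          ∑ w ∈ (Psi k).coeff.support, ((Psi k).coeff w • gMon (FreeMonoid.toList w) : F).coeff v := by
        rw [Finsupp.sum]; rw [MonoidAlgebra.coeff_sum, Finsupp.finset_sum_apply]
      rw [h2] at h1
      obtain ⟨w, hw, hwv⟩ := Finset.exists_ne_zero_of_sum_ne_zero h1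
      have hg : (gMon (FreeMonoid.toList w)).coeff v ≠ 0 := by
        intro h0
        rw [MonoidAlgebra.coeff_smul, Finsupp.smul_apply, h0, smul_zero] at hwv
        exact hwv rfl
      have := gMon_supp (FreeMonoid.toList w) v hg
      rw [this, ih w (Finsupp.mem_support_iff.mp hw)]
noncomputable def eMon (w : Mon) : ℚ := (w.map fun b => if b then (1/2 : ℚ) else 0).prod

lemma eval0_Phi_mono (w : Mon) : (Phi (mono w)).eval 0 = eMon w := by
  induction w with
  | nil => simp [mono_nil, eMon]
  | cons a t ih =>
    have h1 : mono (a :: t) = mono [a] * mono t := by rw [mono_mul]; rfl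
    rw [h1, map_mul, eval_mul, ih]
    cases a <;> simp [Phi_mono, eMon]

lemma eval0_Phi (p : F) : (Phi p).eval 0 = p.coeff.sum fun w c => c * eMon (FreeMonoid.toList w) := by
  classical
  induction p using MonoidAlgebra.induction_linear with
  | zero => simp
  | add p q hp hq =>
    rw [map_add, eval_add, hp, hq, MonoidAlgebra.coeff_add, Finsupp.sum_add_index]
    · intro w _; simp
    · intro w _ c d; ring
  | single w c =>
    rw [MonoidAlgebra.coeff_single, Finsupp.sum_single_index (by simp)]
    have h : (MonoidAlgebra.single w c : F) = c • mono (FreeMonoid.toList w) := by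
      simp [mono, MonoidAlgebra.smul_single']
    rw [show Phi (MonoidAlgebra.single w c) = Phi (c • mono (FreeMonoid.toList w)) by rw [← h],
      map_smul]
    simp [eval0_Phi_mono, smul_eq_mul]

lemma eMon_ne_zero {w : Mon} (h : eMon w ≠ 0) : w = List.replicate w.length true := by
  induction w with
  | nil => rfl
  | cons a t ih =>
    rcases a with _ | _
    · exact absurd (by simp [eMon]) h
    · have he : eMon (true :: t) = (1/2) * eMon t := by
        simp only [eMon, List.map_cons, List.prod_cons]; norm_num
      have ht : eMon t ≠ 0 := fun h0 => h (by rw [he, h0, mul_zero])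
      simpa [List.replicate_succ] using ih ht

lemma eMon_replicate (n : ℕ) : eMon (List.replicate n true) = (1/2 : ℚ) ^ n := by
  simp [eMon, List.map_replicate, List.prod_replicate]

lemma deg_replicate (n : ℕ) : deg (List.replicate n true) = 2 * n := by
  simp [deg, List.count_replicate]; ring

lemma extraction (n : ℕ) :
    (Phi (Psi (2 * n))).eval 0 = beta (List.replicate n true) * (1/2 : ℚ) ^ n := by
  rw [eval0_Phi]
  rw [Finsupp.sum_eq_single (FreeMonoid.ofList (List.replicate n true))]
  · rw [FreeMonoid.toList_ofList, eMon_replicate, beta, deg_replicate]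
  · intro w hw hne
    rcases eq_or_ne (eMon (FreeMonoid.toList w)) 0 with h0 | h0
    · rw [h0, mul_zero]
    · exfalso
      have hall := eMon_ne_zero h0
      have hdeg := Psi_supp (2 * n) w hw
      rw [hall] at hdeg
      rw [deg_replicate] at hdeg
      have hlen : (FreeMonoid.toList w).length = n := by omega
      apply hne
      have : FreeMonoid.toList w = List.replicate n true := by rw [hall, hlen]
      calc w = FreeMonoid.ofList (FreeMonoid.toList w) := rfl
        _ = FreeMonoid.ofList (List.replicate n true) := by rw [this]
  · intro _; ring

noncomputable def Pq : ℕ → ℚ[X]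
  | 0 => X
  | n+1 => (1 + X ^ 2) * derivative (Pq n)

noncomputable def Bq : ℕ → ℚ[X]
  | 0 => 1
  | n+1 => X * Bq n + (1 + X ^ 2) * derivative (Bq n)

lemma Pq_eq (k : ℕ) : Pq (k + 1) = C ((2:ℚ) ^ k) * ((1 + X ^ 2) * Phi (Psi k)) := by
  induction k with
  | zero => simp [Pq, Psi, Phi_mono]
  | succ k ih =>
    have hstep : Phi (Psi (k + 1)) = Phi (Psi k) * X + Lh (Phi (Psi k)) := by
      rw [show Psi (k+1) = Psi k * cF + G (Psi k) from rfl, map_add, map_mul, Phi_cF, Phi_G]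
    rw [show Pq (k+2) = (1 + X ^ 2) * derivative (Pq (k+1)) from rfl, ih, hstep,
      derivative_C_mul, Lh_apply]
    have hC2 : (C (2:ℚ)) = (2:ℚ[X]) := map_ofNat (C : ℚ →+* ℚ[X]) 2
    have hhalf : (2:ℚ[X]) * C (1/2:ℚ) = 1 := by rw [← hC2, ← C_mul]; norm_num
    have hpow : C ((2:ℚ)^(k+1)) = C ((2:ℚ)^k) * 2 := by rw [← hC2, ← C_mul, pow_succ]
    rw [hpow]
    simp only [derivative_mul, derivative_one, derivative_X, derivative_X_pow, derivative_add,
      zero_add, mul_one, pow_one, C_eq_natCast]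
    linear_combination (-(C ((2:ℚ)^k)) * (1+X^2)^2 * derivative (Phi (Psi k))) * hhalf

/-- The Euler numbers `E_m`, defined by `tan x + sec x = Σ_m E_m xᵐ/m!`,
i.e. `E_m` is the `m`-th derivative of `tan x + sec x` at `0`. -/
noncomputable def eulerNumber (m : ℕ) : ℝ :=
  iteratedDeriv m (fun x => Real.tan x + (Real.cos x)⁻¹) 0

lemma key2 (n : ℕ) : (Pq (2*n+1)).eval 0 = 2^n * beta (List.replicate n true) := by
  rw [Pq_eq, eval_mul, eval_C, eval_mul, extraction]
  have h4 : ((2:ℚ)^(2*n)) * ((1/2:ℚ)^n) = 2^n := by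
    rw [pow_mul, ← mul_pow]; norm_num
  simp only [eval_add, eval_one, eval_pow, eval_X]
  norm_num
  calc (2:ℚ)^(2*n) * (beta (List.replicate n true) * (1/2)^n)
      = ((2:ℚ)^(2*n) * (1/2)^n) * beta (List.replicate n true) := by ring
    _ = 2^n * beta (List.replicate n true) := by rw [h4]

lemma Bq_comp (k : ℕ) : (Bq k).comp (-X) = C ((-1:ℚ)^k) * Bq k := by
  induction k with
  | zero => simp [Bq]
  | succ k ih =>
    have hCC : C ((-1:ℚ)^(k+1)) = - C ((-1:ℚ)^k) := by
      rw [pow_succ, C_mul]; simp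
    have hd : (derivative (Bq k)).comp (-X) = - (C ((-1:ℚ)^k) * derivative (Bq k)) := by
      have h := congrArg derivative ih
      rw [derivative_comp, derivative_C_mul] at h
      simp only [derivative_neg, derivative_X] at h
      linear_combination -h
    rw [show Bq (k+1) = X * Bq k + (1 + X ^ 2) * derivative (Bq k) from rfl]
    simp only [add_comp, mul_comp, X_comp, one_comp, pow_comp, neg_comp, ih, hd, hCC]
    ring

lemma Bq_odd (n : ℕ) : (Bq (2*n+1)).eval 0 = 0 := by
  have h := congrArg (eval (0:ℚ)) (Bq_comp (2*n+1))
  rw [eval_comp] at h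
  simp only [eval_neg, eval_X, neg_zero, eval_mul, eval_C] at h
  have hodd : ((-1:ℚ))^(2*n+1) = -1 := Odd.neg_one_pow ⟨n, by ring⟩
  rw [hodd] at h
  linarith

lemma iteratedDeriv_tan_sec (m : ℕ) :
    ∀ x ∈ Set.Ioo (-(Real.pi/2)) (Real.pi/2),
    iteratedDeriv m (fun x => Real.tan x + (Real.cos x)⁻¹) x =
      aeval (Real.tan x) (Pq m) + (Real.cos x)⁻¹ * aeval (Real.tan x) (Bq m) := by
  have haev : ∀ (p : ℚ[X]) (s : ℝ), aeval s p = ((p.map (algebraMap ℚ ℝ)).eval s) := by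
    intro p s; rw [aeval_def, eval_map]
  induction m with
  | zero => intro x hx; simp [Pq, Bq, iteratedDeriv_zero]
  | succ m ih =>
    intro x hx
    have hc : Real.cos x ≠ 0 := (Real.cos_pos_of_mem_Ioo hx).ne'
    rw [iteratedDeriv_succ]
    have hev : iteratedDeriv m (fun x => Real.tan x + (Real.cos x)⁻¹) =ᶠ[nhds x]
        fun y => aeval (Real.tan y) (Pq m) + (Real.cos y)⁻¹ * aeval (Real.tan y) (Bq m) := by
      filter_upwards [isOpen_Ioo.mem_nhds hx] with y hy using ih y hy
    rw [hev.deriv_eq]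
    have htan : HasDerivAt Real.tan (1 / Real.cos x ^ 2) x := Real.hasDerivAt_tan hc
    have hP : HasDerivAt (fun y => aeval (Real.tan y) (Pq m))
        (aeval (Real.tan x) (derivative (Pq m)) * (1 / Real.cos x ^ 2)) x := by
      simp only [haev]
      have h2 := (Polynomial.hasDerivAt ((Pq m).map (algebraMap ℚ ℝ)) (Real.tan x)).comp x htan
      rwa [derivative_map] at h2
    have hB : HasDerivAt (fun y => aeval (Real.tan y) (Bq m))
        (aeval (Real.tan x) (derivative (Bq m)) * (1 / Real.cos x ^ 2)) x := by
      simp only [haev]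
      have h2 := (Polynomial.hasDerivAt ((Bq m).map (algebraMap ℚ ℝ)) (Real.tan x)).comp x htan
      rwa [derivative_map] at h2
    have hsec : HasDerivAt (fun y => (Real.cos y)⁻¹) (Real.sin x / Real.cos x ^ 2) x := by
      have h2 := (Real.hasDerivAt_cos x).inv hc
      rw [neg_neg] at h2; exact h2
    have total := hP.add (hsec.mul hB)
    rw [(show HasDerivAt (fun y => aeval (Real.tan y) (Pq m) + (Real.cos y)⁻¹ * aeval (Real.tan y) (Bq m)) _ x from total).deriv]
    have hsq : 1 / Real.cos x ^ 2 = 1 + Real.tan x ^ 2 := by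
      rw [Real.tan_eq_sin_div_cos]
      field_simp
      linarith [Real.sin_sq_add_cos_sq x]
    have hsin : Real.sin x / Real.cos x ^ 2 = Real.tan x * (Real.cos x)⁻¹ := by
      rw [Real.tan_eq_sin_div_cos, sq]
      field_simp
    rw [show Pq (m+1) = (1 + X ^ 2) * derivative (Pq m) from rfl,
      show Bq (m+1) = X * Bq m + (1 + X ^ 2) * derivative (Bq m) from rfl]
    simp only [map_add, map_mul, map_one, map_pow, aeval_X]
    rw [hsq, hsin]
    ring

/-- For every `n ≥ 0`, `2ⁿ · β(dⁿ) = E_{2n+1}`. -/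
theorem beta_d_pow (n : ℕ) :
    (2 : ℝ) ^ n * (beta (List.replicate n true) : ℝ) = eulerNumber (2 * n + 1) := by
  have hpi := Real.pi_pos
  have h0mem : (0:ℝ) ∈ Set.Ioo (-(Real.pi/2)) (Real.pi/2) := by
    constructor <;> [linarith; linarith]
  have h := iteratedDeriv_tan_sec (2*n+1) 0 h0mem
  have haev0 : ∀ p : ℚ[X], aeval (0:ℝ) p = ((p.eval 0 : ℚ) : ℝ) := by
    intro p
    rw [aeval_def, eval₂_at_zero, coeff_zero_eq_eval_zero, eq_ratCast]
  rw [Real.tan_zero, Real.cos_zero, haev0, haev0, key2, Bq_odd] at h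
  rw [eulerNumber, h]
  push_cast
  ring
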